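/- arXiv:math/9209218 — 2 statements merged into one kernel-verified Lean document; each statement's English description precedes it below -/
import Mathlib

section
/- Let n, l, k be natural numbers with n, l ≥ 2, and let W ⊆ n × n be a set such that whenever I ⊆ n with #(I) = l and J_0,…,J_{l−1} ⊆ n are pairwise disjoint sets each of cardinality at most k, there are i ∈ I and j < l with {i} × J_j ⊆ W. Take r ≤ k, set Z = n^r, and let W̃ = { (i,z) : i < n, z ∈ Z, (i, z(j)) ∈ W for every j < r }. Let m ≥ 1, 𝒜 a nonempty family of nonempty sets, 𝕋 the family of nonempty subsets of 𝒜^m with the relation ⪯ (defined using the parameter l), 𝒯₀ ∈ 𝕋, and H : 𝒯₀ → n any function. Then either there are i < n and 𝒯 ⪯ 𝒯₀ such that H(t) = i for every t ∈ 𝒯, or there is a set J ⊆ n with #(J) ≤ r·l such that for every z ∈ (n \ J)^r there is a 𝒯 ⪯ 𝒯₀ with (H(t), z) ∈ W̃ for every t ∈ 𝒯. -/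
/-- For a family `𝒜` of sets (not containing `∅`), `dp 𝒜` is the least cardinality of a finite
set `I` meeting every member of `𝒜`; in particular `dp ∅ = 0`. -/
noncomputable def dp {β : Type*} (𝒜 : Set (Set β)) : ℕ :=
  sInf {m | ∃ I : Finset β, I.card = m ∧ ∀ A ∈ 𝒜, ∃ a ∈ I, a ∈ A}

/-- For a set `𝒯` of sequences (of members of `𝒜`) of length `m`,
`starSet m 𝒯 = 𝒯* = { t↾j : t ∈ 𝒯, j ≤ m }`, the set of initial segments of members of `𝒯`. -/
def starSet {β : Type*} (m : ℕ) (𝒯 : Set (List (Set β))) : Set (List (Set β)) :=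
  {s | ∃ t ∈ 𝒯, ∃ j ≤ m, s = t.take j}

/-- `𝒯 ⪯ 𝒯₀` iff `𝒯 ⊆ 𝒯₀` and
`dp { u : t⌢u ∈ 𝒯* } ≥ dp { u : t⌢u ∈ 𝒯₀* } / (2l)` for every `t ∈ 𝒯* \ 𝒯`. -/
def prec {β : Type*} (l m : ℕ) (𝒯 𝒯₀ : Set (List (Set β))) : Prop :=
  𝒯 ⊆ 𝒯₀ ∧ ∀ t ∈ starSet m 𝒯 \ 𝒯,
    (dp {u | t ++ [u] ∈ starSet m 𝒯₀} : ℝ) / (2 * l) ≤ (dp {u | t ++ [u] ∈ starSet m 𝒯} : ℝ)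

/-!
Call a tree `𝒯` of height `m` `γ`-bushy for a weight `w` when the successors of every internal
node `s` have `dp` at least `γ * w s`. With `w s` the `dp` of the successors of `s` in `𝒯₀`,
`𝒯 ⪯ 𝒯₀` means that `𝒯 ⊆ 𝒯₀` is `1/(2l)`-bushy. By induction on the height, for any set `𝒰` a
`(δ + ε)`-bushy tree has a `δ`-bushy subtree avoiding `𝒰` or an `ε`-bushy subtree inside `𝒰`.

Suppose both alternatives fail. Call `t` compatible with `R ⊆ n` when `(H t, b) ∈ W` for all
`b ∈ R`. The failure of the second alternative lets us choose greedily `l` pairwise disjoint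
sets `f j` of size at most `r` such that no `1/(2l)`-bushy subtree of `𝒯₀` consists of members
compatible with `f j`. Splitting `𝒯₀` along them `l` times leaves a `1/2`-bushy tree `𝒯₁` none
of whose members is compatible with any `f j`. The failure of the first alternative means that
no `1/(2l)`-bushy subtree is monochromatic, so splitting `𝒯₁` along colours peels off a new
colour each time and `H` takes at least `l` values on `𝒯₁`. The hypothesis on `W` for these `l`
colours and the sets `f j` then yields a contradiction.
-/

open Function in
theorem Finset.exists_pairwise_disjoint_of_forall_exists_disjoint {α : Type*}
    (P : Finset α → Prop) (r l : ℕ)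
    (h : ∀ J : Finset α, J.card ≤ r * l → ∃ R, R.card ≤ r ∧ Disjoint R J ∧ P R) :
    ∃ f : Fin l → Finset α, (∀ j, (f j).card ≤ r ∧ P (f j)) ∧ Pairwise (Disjoint on f) := by
  classical
  induction l with
  | zero => exact ⟨finZeroElim, finZeroElim, fun i => i.elim0⟩
  | succ l ih =>
    obtain ⟨f, hf, hdisj⟩ := ih fun J hJ => h J (hJ.trans (by nlinarith))
    have hcard : (Finset.univ.biUnion f).card ≤ r * (l + 1) :=
      calc (Finset.univ.biUnion f).card ≤ ∑ j, (f j).card := Finset.card_biUnion_le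
        _ ≤ ∑ _j : Fin l, r := Finset.sum_le_sum fun j _ => (hf j).1
        _ ≤ r * (l + 1) := by simp [mul_comm, Nat.mul_le_mul_left]
    obtain ⟨R, hRcard, hRdisj, hR⟩ := h _ hcard
    have hRf : ∀ j, Disjoint R (f j) := fun j =>
      hRdisj.mono_right (Finset.subset_biUnion_of_mem f (Finset.mem_univ j))
    refine ⟨Fin.cons R f, fun j => Fin.cases ⟨hRcard, hR⟩ hf j, fun i j hij => ?_⟩
    cases i using Fin.cases <;> cases j using Fin.cases
    · exact absurd rfl hij
    · exact hRf _
    · exact (hRf _).symm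
    · exact hdisj (ne_of_apply_ne Fin.succ hij)

section Trees

variable {β : Type*} {m : ℕ} {w : List (Set β) → ℝ} {γ : ℝ} {𝒯 : Set (List (Set β))}
  {X : Set (Set β)} {P : Set β → Set (List (Set β))} {u : Set β}

lemma dp_le_card {𝒜 : Set (Set β)} {I : Finset β} (hI : ∀ A ∈ 𝒜, ∃ a ∈ I, a ∈ A) :
    dp 𝒜 ≤ I.card :=
  Nat.sInf_le ⟨I, rfl, hI⟩

lemma exists_card_eq_dp {𝒜 : Set (Set β)} (h : ∃ I : Finset β, ∀ A ∈ 𝒜, ∃ a ∈ I, a ∈ A) :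
    ∃ I : Finset β, I.card = dp 𝒜 ∧ ∀ A ∈ 𝒜, ∃ a ∈ I, a ∈ A :=
  let ⟨I, hI⟩ := h
  Nat.sInf_mem (s := {m | ∃ I : Finset β, I.card = m ∧ ∀ A ∈ 𝒜, ∃ a ∈ I, a ∈ A}) ⟨_, I, rfl, hI⟩

lemma dp_union_le (𝒜 ℬ : Set (Set β)) : dp (𝒜 ∪ ℬ) ≤ dp 𝒜 + dp ℬ := by
  by_cases h : ∃ I : Finset β, ∀ A ∈ 𝒜 ∪ ℬ, ∃ a ∈ I, a ∈ A
  · classical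
    obtain ⟨I, hI⟩ := h
    obtain ⟨I𝒜, hI𝒜, h𝒜⟩ := exists_card_eq_dp ⟨I, fun A hA => hI A (Or.inl hA)⟩
    obtain ⟨Iℬ, hIℬ, hℬ⟩ := exists_card_eq_dp ⟨I, fun A hA => hI A (Or.inr hA)⟩
    have hunion : ∀ A ∈ 𝒜 ∪ ℬ, ∃ a ∈ I𝒜 ∪ Iℬ, a ∈ A := by
      rintro A (hA | hA)
      · obtain ⟨a, ha, haA⟩ := h𝒜 A hA
        exact ⟨a, Finset.mem_union_left _ ha, haA⟩
      · obtain ⟨a, ha, haA⟩ := hℬ A hA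
        exact ⟨a, Finset.mem_union_right _ ha, haA⟩
    calc dp (𝒜 ∪ ℬ) ≤ (I𝒜 ∪ Iℬ).card := dp_le_card hunion
      _ ≤ I𝒜.card + Iℬ.card := Finset.card_union_le _ _
      _ = dp 𝒜 + dp ℬ := by rw [hI𝒜, hIℬ]
  · have hempty : {m | ∃ I : Finset β, I.card = m ∧ ∀ A ∈ 𝒜 ∪ ℬ, ∃ a ∈ I, a ∈ A} = ∅ :=
      Set.eq_empty_of_forall_notMem fun _ ⟨I, _, hI⟩ => h ⟨I, hI⟩
    rw [dp, hempty, Nat.sInf_empty]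
    exact Nat.zero_le _

lemma exists_le_dp_of_le_dp_union {𝒜 ℬ : Set (Set β)} (hne : (𝒜 ∪ ℬ).Nonempty) {a b : ℝ}
    (ha : 0 ≤ a) (hb : 0 ≤ b) (h : a + b ≤ dp (𝒜 ∪ ℬ)) :
    (𝒜.Nonempty ∧ a ≤ dp 𝒜) ∨ (ℬ.Nonempty ∧ b ≤ dp ℬ) := by
  rcases 𝒜.eq_empty_or_nonempty with rfl | h𝒜
  · rw [Set.empty_union] at hne h
    exact Or.inr ⟨hne, by linarith⟩
  rcases ℬ.eq_empty_or_nonempty with rfl | hℬ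
  · rw [Set.union_empty] at h
    exact Or.inl ⟨h𝒜, by linarith⟩
  by_cases ha𝒜 : a ≤ dp 𝒜
  · exact Or.inl ⟨h𝒜, ha𝒜⟩
  · have : (dp (𝒜 ∪ ℬ) : ℝ) ≤ dp 𝒜 + dp ℬ := by exact_mod_cast dp_union_le 𝒜 ℬ
    exact Or.inr ⟨hℬ, by linarith⟩

def childTree (u : Set β) (𝒯 : Set (List (Set β))) : Set (List (Set β)) :=
  List.cons u ⁻¹' 𝒯

def roots (𝒯 : Set (List (Set β))) : Set (Set β) :=
  {u | (childTree u 𝒯).Nonempty}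

def successors (m : ℕ) (𝒯 : Set (List (Set β))) (s : List (Set β)) : Set (Set β) :=
  {u | s ++ [u] ∈ starSet m 𝒯}

lemma nonempty_of_mem_starSet {s : List (Set β)}
    (hs : s ∈ starSet m 𝒯) : 𝒯.Nonempty :=
  let ⟨t, ht, _⟩ := hs
  ⟨t, ht⟩

lemma nil_mem_starSet_iff : [] ∈ starSet m 𝒯 ↔ 𝒯.Nonempty :=
  ⟨nonempty_of_mem_starSet, fun ⟨t, ht⟩ => ⟨t, ht, 0, Nat.zero_le _, by simp⟩⟩

lemma cons_mem_starSet_succ_iff {s : List (Set β)} :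
    u :: s ∈ starSet (m + 1) 𝒯 ↔ s ∈ starSet m (childTree u 𝒯) := by
  constructor
  · rintro ⟨_ | ⟨a, t⟩, ht, _ | j, hj, heq⟩ <;> simp at heq
    obtain ⟨rfl, rfl⟩ := heq
    exact ⟨t, ht, j, by omega, rfl⟩
  · rintro ⟨t, ht, j, hj, rfl⟩
    exact ⟨u :: t, ht, j + 1, by omega, rfl⟩

lemma successors_succ_cons (s : List (Set β)) :
    successors (m + 1) 𝒯 (u :: s) = successors m (childTree u 𝒯) s :=
  Set.ext fun _ => cons_mem_starSet_succ_iff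

lemma successors_succ_nil : successors (m + 1) 𝒯 [] = roots 𝒯 :=
  Set.ext fun _ => cons_mem_starSet_succ_iff.trans nil_mem_starSet_iff

structure Bushy (m : ℕ) (w : List (Set β) → ℝ) (γ : ℝ) (𝒯 : Set (List (Set β))) : Prop where
  nonempty : 𝒯.Nonempty
  length_eq : ∀ t ∈ 𝒯, t.length = m
  le_dp : ∀ s ∈ starSet m 𝒯 \ 𝒯, γ * w s ≤ dp (successors m 𝒯 s)

lemma bushy_zero_iff : Bushy 0 w γ 𝒯 ↔ 𝒯 = {[]} := by
  constructor
  · rintro ⟨⟨t, ht⟩, hlen, -⟩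
    rw [List.length_eq_zero_iff.1 (hlen t ht)] at ht
    exact Set.eq_singleton_iff_unique_mem.2
      ⟨ht, fun t' ht' => List.length_eq_zero_iff.1 (hlen t' ht')⟩
  · rintro rfl
    refine ⟨Set.singleton_nonempty _, by simp, ?_⟩
    rintro s ⟨⟨t, rfl, j, hj, rfl⟩, hs⟩
    simp at hs

lemma bushy_succ_iff :
    Bushy (m + 1) w γ 𝒯 ↔ [] ∉ 𝒯 ∧ (roots 𝒯).Nonempty ∧ γ * w [] ≤ dp (roots 𝒯) ∧
      ∀ u ∈ roots 𝒯, Bushy m (fun s => w (u :: s)) γ (childTree u 𝒯) := by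
  constructor
  · rintro ⟨⟨t, ht⟩, hlen, hdp⟩
    have hnil : [] ∉ 𝒯 := fun h => by simpa using hlen _ h
    refine ⟨hnil, ?_, ?_, fun u hu => ⟨hu, fun t ht => ?_, fun s hs => ?_⟩⟩
    · obtain _ | ⟨u, t⟩ := t
      · exact absurd ht hnil
      · exact ⟨u, t, ht⟩
    · simpa [successors_succ_nil] using hdp [] ⟨nil_mem_starSet_iff.2 ⟨t, ht⟩, hnil⟩
    · simpa using hlen _ ht
    · simpa [successors_succ_cons] using
        hdp (u :: s) ⟨cons_mem_starSet_succ_iff.2 hs.1, hs.2⟩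
  · rintro ⟨hnil, ⟨u, t, ht⟩, hroot, hchild⟩
    refine ⟨⟨_, ht⟩, fun t ht => ?_, fun s hs => ?_⟩
    · obtain _ | ⟨u, t⟩ := t
      · exact absurd ht hnil
      · simpa using (hchild u ⟨t, ht⟩).length_eq t ht
    · obtain _ | ⟨u, s⟩ := s
      · rwa [successors_succ_nil]
      · have hs' := cons_mem_starSet_succ_iff.1 hs.1
        rw [successors_succ_cons]
        exact (hchild u (nonempty_of_mem_starSet hs')).le_dp s ⟨hs', hs.2⟩

def graft (X : Set (Set β)) (P : Set β → Set (List (Set β))) : Set (List (Set β)) :=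
  {s | ∃ u ∈ X, ∃ t ∈ P u, u :: t = s}

lemma graft_subset {𝒮 : Set (List (Set β))} (h : ∀ u ∈ X, P u ⊆ childTree u 𝒮) : graft X P ⊆ 𝒮 := by
  rintro _ ⟨u, hu, t, ht, rfl⟩
  exact h u hu ht

lemma childTree_graft (hu : u ∈ X) : childTree u (graft X P) = P u := by
  ext t
  constructor
  · rintro ⟨u', hu', t', ht', heq⟩
    obtain ⟨rfl, rfl⟩ := List.cons_eq_cons.1 heq
    exact ht'
  · exact fun ht => ⟨u, hu, t, ht, rfl⟩

lemma roots_graft (hP : ∀ u ∈ X, (P u).Nonempty) : roots (graft X P) = X := by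
  ext u
  constructor
  · rintro ⟨t, u', hu', t', -, heq⟩
    rwa [(List.cons_eq_cons.1 heq).1] at hu'
  · intro hu
    show (childTree u (graft X P)).Nonempty
    rw [childTree_graft hu]
    exact hP u hu

lemma bushy_graft (hX : X.Nonempty) (hdp : γ * w [] ≤ dp X)
    (hP : ∀ u ∈ X, Bushy m (fun s => w (u :: s)) γ (P u)) :
    Bushy (m + 1) w γ (graft X P) := by
  rw [bushy_succ_iff, roots_graft fun u hu => (hP u hu).nonempty]
  refine ⟨fun ⟨_, _, _, _, h⟩ => List.cons_ne_nil _ _ h, hX, hdp, fun u hu => ?_⟩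
  rw [childTree_graft hu]
  exact hP u hu

namespace Bushy

/-- Sort the roots by which alternative the induction hypothesis gives above them;
subadditivity of `dp` lets one of the two classes inherit its share of the root's branching. -/
theorem split (hw : ∀ s, 0 ≤ w s) {δ ε : ℝ} (hδ : 0 ≤ δ) (hε : 0 ≤ ε)
    (h : Bushy m w (δ + ε) 𝒯) (𝒰 : Set (List (Set β))) :
    (∃ 𝒯' ⊆ 𝒯 \ 𝒰, Bushy m w δ 𝒯') ∨ (∃ 𝒯' ⊆ 𝒯 ∩ 𝒰, Bushy m w ε 𝒯') := by
  induction m generalizing w 𝒯 𝒰 with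
  | zero =>
    rw [bushy_zero_iff] at h
    subst h
    by_cases hnil : [] ∈ 𝒰
    · exact Or.inr ⟨{[]}, by simpa using hnil, bushy_zero_iff.2 rfl⟩
    · exact Or.inl ⟨{[]}, by simpa using hnil, bushy_zero_iff.2 rfl⟩
  | succ m ih =>
    obtain ⟨-, hne, hroot, hchild⟩ := bushy_succ_iff.1 h
    set A := {u ∈ roots 𝒯 |
      ∃ P ⊆ childTree u (𝒯 \ 𝒰), Bushy m (fun s => w (u :: s)) δ P}
    have hB : ∀ u ∈ roots 𝒯 \ A,
        ∃ P ⊆ childTree u (𝒯 ∩ 𝒰), Bushy m (fun s => w (u :: s)) ε P := fun u hu =>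
      (ih (fun _ => hw _) (hchild u hu.1) (childTree u 𝒰)).resolve_left fun h' => hu.2 ⟨hu.1, h'⟩
    rw [← Set.union_sdiff_cancel (Set.sep_subset (roots 𝒯) _)] at hne hroot
    rcases exists_le_dp_of_le_dp_union hne (mul_nonneg hδ (hw [])) (mul_nonneg hε (hw []))
      (by rwa [← add_mul]) with ⟨hAne, hAdp⟩ | ⟨hBne, hBdp⟩
    · choose! P hPsub hP using fun u (hu : u ∈ A) => hu.2
      exact Or.inl ⟨graft A P, graft_subset hPsub, bushy_graft hAne hAdp hP⟩
    · choose! P hPsub hP using hB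
      exact Or.inr ⟨graft _ P, graft_subset hPsub, bushy_graft hBne hBdp hP⟩

theorem exists_subset_forall_notMem {ι : Type*} (hw : ∀ s, 0 ≤ w s) {ε : ℝ} (hε : 0 ≤ ε)
    (s : Finset ι) (hγ : s.card * ε ≤ γ) (h : Bushy m w γ 𝒯)
    (𝒰 : ι → Set (List (Set β))) (h𝒰 : ∀ i ∈ s, ∀ 𝒯' ⊆ 𝒯 ∩ 𝒰 i, ¬ Bushy m w ε 𝒯') :
    ∃ 𝒯' ⊆ 𝒯, Bushy m w (γ - s.card * ε) 𝒯' ∧ ∀ i ∈ s, ∀ t ∈ 𝒯', t ∉ 𝒰 i := by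
  classical
  induction s using Finset.induction_on with
  | empty => exact ⟨𝒯, subset_rfl, by simpa using h, by simp⟩
  | insert i s hi ih =>
    rw [Finset.card_insert_of_notMem hi, Nat.cast_succ] at hγ ⊢
    obtain ⟨𝒯₁, h₁sub, h₁, h₁out⟩ := ih (by nlinarith)
      fun j hj => h𝒰 j (Finset.mem_insert_of_mem hj)
    have h₁' : Bushy m w ((γ - (s.card + 1) * ε) + ε) 𝒯₁ := by convert h₁ using 1; ring
    rcases h₁'.split hw (by linarith) hε (𝒰 i) with ⟨𝒯₂, h₂sub, h₂⟩ | ⟨𝒯₂, h₂sub, h₂⟩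
    · refine ⟨𝒯₂, fun t ht => h₁sub (h₂sub ht).1, h₂, fun j hj t ht => ?_⟩
      rcases Finset.mem_insert.1 hj with rfl | hj
      · exact (h₂sub ht).2
      · exact h₁out j hj t (h₂sub ht).1
    · exact absurd h₂ (h𝒰 i (Finset.mem_insert_self i s) 𝒯₂
        fun t ht => ⟨h₁sub (h₂sub ht).1, (h₂sub ht).2⟩)

theorem exists_finset_card_eq_subset_image {α : Type*} (hw : ∀ s, 0 ≤ w s) {ε : ℝ}
    (hε : 0 ≤ ε) (p : ℕ) (hγ : ((p : ℝ) - 1) * ε ≤ γ)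
    (h : Bushy m w γ 𝒯) (H : List (Set β) → α)
    (hH : ∀ c, ∀ 𝒯' ⊆ 𝒯 ∩ {t | H t = c}, ¬ Bushy m w ε 𝒯') :
    ∃ C : Finset α, C.card = p ∧ ↑C ⊆ H '' 𝒯 := by
  by_cases hfin : (H '' 𝒯).Finite
  · have hcard : p ≤ hfin.toFinset.card := by
      by_contra! hlt
      have hle : (hfin.toFinset.card : ℝ) ≤ p - 1 := by
        rw [le_sub_iff_add_le]; exact_mod_cast hlt
      obtain ⟨𝒯', h'sub, h', hout⟩ := h.exists_subset_forall_notMem hw hε hfin.toFinset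
        (by nlinarith) (fun c => {t | H t = c}) fun c _ => hH c
      obtain ⟨t, ht⟩ := h'.nonempty
      exact hout (H t) (by simpa using ⟨t, h'sub ht, rfl⟩) t ht rfl
    obtain ⟨C, hC, hCcard⟩ := Finset.exists_subset_card_eq hcard
    exact ⟨C, hCcard, fun c hc => by simpa using hC hc⟩
  · obtain ⟨C, hC, hCcard⟩ := Set.Infinite.exists_subset_card_eq hfin p
    exact ⟨C, hCcard, hC⟩

end Bushy

lemma bushy_successors_self (hne : 𝒯.Nonempty)
    (hlen : ∀ t ∈ 𝒯, t.length = m) : Bushy m (fun s => (dp (successors m 𝒯 s) : ℝ)) 1 𝒯 :=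
  ⟨hne, hlen, fun _ _ => (one_mul _).le⟩

lemma prec_of_bushy {l : ℕ} {𝒯₀ : Set (List (Set β))} (hsub : 𝒯 ⊆ 𝒯₀)
    (h : Bushy m (fun s => (dp (successors m 𝒯₀ s) : ℝ)) (1 / (2 * l)) 𝒯) : prec l m 𝒯 𝒯₀ :=
  ⟨hsub, fun t ht => by rw [← one_div_mul_eq_div]; exact h.le_dp t ht⟩

end Trees

theorem stmt_3_general {β : Type*} (n l k r m : ℕ) (hl : 2 ≤ l) (hr : r ≤ k)
    (W : Set (Fin n × Fin n))
    (hW : ∀ I : Finset (Fin n), I.card = l →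
      ∀ J : Fin l → Finset (Fin n),
        (∀ j, (J j).card ≤ k) → (∀ j j', j ≠ j' → Disjoint (J j) (J j')) →
        ∃ i ∈ I, ∃ j : Fin l, ∀ a ∈ J j, ((i : Fin n), a) ∈ W)
    (𝒜 : Set (Set β))
    (𝒯₀ : Set (List (Set β))) (h𝒯₀ : 𝒯₀.Nonempty)
    (h𝒯₀m : ∀ t ∈ 𝒯₀, t.length = m ∧ ∀ u ∈ t, u ∈ 𝒜)
    (H : List (Set β) → Fin n) :
    (∃ i : Fin n, ∃ 𝒯 : Set (List (Set β)), 𝒯.Nonempty ∧ prec l m 𝒯 𝒯₀ ∧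
        ∀ t ∈ 𝒯, H t = i) ∨
    (∃ J : Finset (Fin n), J.card ≤ r * l ∧
        ∀ z : Fin r → Fin n, (∀ j, z j ∉ J) →
          ∃ 𝒯 : Set (List (Set β)), 𝒯.Nonempty ∧ prec l m 𝒯 𝒯₀ ∧
            ∀ t ∈ 𝒯, ∀ j : Fin r, (H t, z j) ∈ W) := by
  set w : List (Set β) → ℝ := fun s => dp (successors m 𝒯₀ s)
  have hw : ∀ s, 0 ≤ w s := fun _ => Nat.cast_nonneg _
  have hl0 : (0 : ℝ) < l := by exact_mod_cast (by omega : 0 < l)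
  set ε : ℝ := 1 / (2 * l)
  have hε : 0 ≤ ε := by positivity
  have hlε : (l : ℝ) * ε = 1 / 2 := by simp only [ε]; field_simp
  refine or_iff_not_imp_left.2 fun hmono => ?_
  by_contra hcompat
  push Not at hcompat
  obtain ⟨f, hf, hdisj⟩ := Finset.exists_pairwise_disjoint_of_forall_exists_disjoint
    (fun R => ∀ 𝒯 ⊆ 𝒯₀ ∩ {t | ∀ b ∈ R, (H t, b) ∈ W}, ¬ Bushy m w ε 𝒯) r l fun J hJ => by
      obtain ⟨z, hzJ, hz⟩ := hcompat J hJ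
      refine ⟨Finset.univ.image z, Finset.card_image_le.trans (by simp), ?_, fun 𝒯 hsub h => ?_⟩
      · simpa [Finset.disjoint_left] using hzJ
      · obtain ⟨t, ht, j, hj⟩ := hz 𝒯 h.nonempty (prec_of_bushy (fun t ht => (hsub ht).1) h)
        exact hj ((hsub ht).2 _ (Finset.mem_image_of_mem z (Finset.mem_univ j)))
  obtain ⟨𝒯₁, h₁sub, h₁, h₁out⟩ := (bushy_successors_self h𝒯₀ fun t ht => (h𝒯₀m t ht).1)
    |>.exists_subset_forall_notMem hw hε Finset.univ (by rw [Finset.card_fin, hlε]; norm_num)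
      _ fun j _ => (hf j).2
  obtain ⟨C, hC, hCsub⟩ := h₁.exists_finset_card_eq_subset_image hw hε l
    (by rw [Finset.card_fin, sub_mul, hlε]; linarith) H fun c 𝒯 hsub h => hmono ⟨c, 𝒯, h.nonempty,
      prec_of_bushy (fun t ht => h₁sub (hsub ht).1) h, fun t ht => (hsub ht).2⟩
  obtain ⟨i, hi, j, hij⟩ := hW C hC f (fun j => (hf j).1.trans hr) fun j j' h => hdisj h
  obtain ⟨t, ht, rfl⟩ := hCsub hi
  exact h₁out j (Finset.mem_univ j) t ht hij

/-- **Corollary 1D.** Let `n, l, k` with `n, l ≥ 2` and `W ⊆ n × n` be such that whenever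
`I ∈ [n]^l` and `J_0, …, J_{l-1} ∈ [n]^{≤k}` are disjoint there are `i ∈ I`, `j < l` with
`{i} × J_j ⊆ W`.  Take `r ≤ k`, `Z = n^r` and
`W̃ = {(i,z) : i < n, z ∈ Z, (i, z(j)) ∈ W ∀ j < r}`.  Let `m ≥ 1`, `𝒜` a nonempty family of
nonempty sets, `𝒯₀` a nonempty set of sequences of length `m` from `𝒜`, and `H : 𝒯₀ → n` any
function.  Then either there are `i < n`, `𝒯 ⪯ 𝒯₀` with `H(t) = i` for all `t ∈ 𝒯`, or there is
`J ∈ [n]^{≤ rl}` such that for every `z ∈ (n \ J)^r` there is `𝒯 ⪯ 𝒯₀` with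
`(H(t), z) ∈ W̃` for every `t ∈ 𝒯`. -/
theorem stmt_3 {β : Type*} (n l k r m : ℕ) (hn : 2 ≤ n) (hl : 2 ≤ l) (hr : r ≤ k) (hm : 1 ≤ m)
    (W : Set (Fin n × Fin n))
    (hW : ∀ I : Finset (Fin n), I.card = l →
      ∀ J : Fin l → Finset (Fin n),
        (∀ j, (J j).card ≤ k) → (∀ j j', j ≠ j' → Disjoint (J j) (J j')) →
        ∃ i ∈ I, ∃ j : Fin l, ∀ a ∈ J j, ((i : Fin n), a) ∈ W)
    (𝒜 : Set (Set β)) (h𝒜 : 𝒜.Nonempty) (h𝒜ne : ∀ A ∈ 𝒜, A.Nonempty)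
    (𝒯₀ : Set (List (Set β))) (h𝒯₀ : 𝒯₀.Nonempty)
    (h𝒯₀m : ∀ t ∈ 𝒯₀, t.length = m ∧ ∀ u ∈ t, u ∈ 𝒜)
    (H : List (Set β) → Fin n) :
    (∃ i : Fin n, ∃ 𝒯 : Set (List (Set β)), 𝒯.Nonempty ∧ prec l m 𝒯 𝒯₀ ∧
        ∀ t ∈ 𝒯, H t = i) ∨
    (∃ J : Finset (Fin n), J.card ≤ r * l ∧
        ∀ z : Fin r → Fin n, (∀ j, z j ∉ J) →
          ∃ 𝒯 : Set (List (Set β)), 𝒯.Nonempty ∧ prec l m 𝒯 𝒯₀ ∧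
            ∀ t ∈ 𝒯, ∀ j : Fin r, (H t, z j) ∈ W) :=
  stmt_3_general n l k r m hl hr W hW 𝒜 𝒯₀ h𝒯₀ h𝒯₀m H
end

section
/- Assume (†), with witnessing data ⟨n_k⟩, ⟨W_k⟩, X, μ, R. Let 𝓘_k = { I ⊆ n_k : #(I) ≤ k and (i,j) ∉ W_k for all distinct i, j ∈ I }, H_{kI} = { x ∈ X : x(k) ∈ I }, A = { χH_{kI} : k ∈ ℕ, I ∈ 𝓘_k } ⊆ ℝ^X, Z the closure of A in ℝ^X for the topology of pointwise convergence, and A′ = Z \ A. Then for every Radon probability measure ν on A′ (with its subspace topology), the function w(x) = ∫_{A′} u(x) ν(du) vanishes μ-almost everywhere; that is, for every δ > 0 the set { x ∈ X : w(x) ≥ δ } has μ-outer measure zero. -/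
/-!
Every `u ∈ A'` is a pointwise limit of functions `χH_{kI}` with `k → ∞`, because only finitely
many members of `A` have bounded index. Hence `u` is `{0,1}`-valued, depends only on the tail of
its argument, and cannot take the value `1` at two `R`-related points `a, b`: at a coordinate `k`
beyond their finitely many agreements, `a k ≠ b k` would both lie in the `W_k`-free set `I`
although `(a k, b k) ∈ W_k`.

So `w` is tail-invariant, and since the coordinates are independent under `μ`, Kolmogorov's
zero-one law says that `{w ≥ δ}` has outer measure `0` or `1`. In the second case `(†)` yields
`r + 1 > 1/δ` pairwise `R`-related points of this set; for every `u` the values `u(x_i)` sum to at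
most `1`, so integrating against `ν` gives `(r + 1) δ ≤ 1`, a contradiction.
-/

open MeasureTheory ProbabilityTheory Filter
open scoped ENNReal

section TailZeroOne

variable {α : ℕ → Type*} {mα : ∀ k, MeasurableSpace (α k)}

def IsTailInvariant (E : Set (∀ k, α k)) : Prop :=
  ∀ ⦃x y : ∀ k, α k⦄, (∀ᶠ k in atTop, x k = y k) → x ∈ E → y ∈ E

def replaceInitial (m : ℕ) (z : (k : Fin m) → α k) (x : ∀ k, α k) : ∀ k, α k :=
  fun k => if h : k < m then z ⟨k, h⟩ else x k

lemma eventually_replaceInitial_eq (m : ℕ) (z : (k : Fin m) → α k) (x : ∀ k, α k) :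
    ∀ᶠ k in atTop, x k = replaceInitial m z x k :=
  eventually_atTop.2 ⟨m, fun k hk => by simp [replaceInitial, not_lt.2 hk]⟩

lemma measurable_replaceInitial (m : ℕ) (z : (k : Fin m) → α k) :
    Measurable[⨆ k ≥ m, (mα k).comap (fun x : ∀ k, α k => x k)] (replaceInitial m z) := by
  refine @measurable_pi_lambda _ _ _ (_) _ _ fun k => ?_
  by_cases hk : k < m
  · simp [replaceInitial, hk]
  · simp only [replaceInitial, hk, dite_false]
    exact (comap_measurable _).mono (le_iSup₂ (f := fun k (_ : k ≥ m) =>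
      (mα k).comap (fun x : ∀ k, α k => x k)) k (not_lt.1 hk)) le_rfl

lemma IsTailInvariant.measurableSet_limsup [∀ k, Nonempty (α k)] {F : Set (∀ k, α k)}
    (hF : IsTailInvariant F) (hFm : MeasurableSet F) :
    MeasurableSet[limsup (fun k => (mα k).comap (fun x : ∀ k, α k => x k)) atTop] F := by
  rw [limsup_eq_iInf_iSup_of_nat, MeasurableSpace.measurableSet_iInf]
  intro m
  let z : (k : Fin m) → α k := fun _ => Classical.arbitrary _
  have hpre : replaceInitial m z ⁻¹' F = F := by
    ext x
    have hx := eventually_replaceInitial_eq m z x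
    exact ⟨fun h => hF (hx.mono fun _ => Eq.symm) h, hF hx⟩
  rw [← hpre]
  exact measurable_replaceInitial m z hFm

def tailCore (F : Set (∀ k, α k)) : Set (∀ k, α k) :=
  {x | ∀ y, (∀ᶠ k in atTop, x k = y k) → y ∈ F}

lemma isTailInvariant_tailCore (F : Set (∀ k, α k)) : IsTailInvariant (tailCore F) :=
  fun _ _ hxy hx z hyz => hx z (hxy.and hyz |>.mono fun _ h => h.1.trans h.2)

lemma tailCore_subset (F : Set (∀ k, α k)) : tailCore F ⊆ F :=
  fun x hx => hx x (Eventually.of_forall fun _ => rfl)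

lemma IsTailInvariant.subset_tailCore {E F : Set (∀ k, α k)} (hE : IsTailInvariant E)
    (hEF : E ⊆ F) : E ⊆ tailCore F :=
  fun _ hx _ hxy => hEF (hE hxy hx)

lemma tailCore_eq_iInter (F : Set (∀ k, α k)) :
    tailCore F = ⋂ (m : ℕ) (z : (k : Fin m) → α k), replaceInitial m z ⁻¹' F := by
  ext x
  simp only [Set.mem_iInter, Set.mem_preimage]
  refine ⟨fun hx m z => hx _ (eventually_replaceInitial_eq m z x), fun hx y hxy => ?_⟩
  obtain ⟨m, hm⟩ := eventually_atTop.1 hxy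
  convert hx m (fun k => y k)
  funext k
  by_cases hk : k < m
  · simp [replaceInitial, hk]
  · simp [replaceInitial, hk, hm k (not_lt.1 hk)]

lemma measurableSet_tailCore [∀ k, Countable (α k)] {F : Set (∀ k, α k)}
    (hF : MeasurableSet F) : MeasurableSet (tailCore F) := by
  rw [tailCore_eq_iInter]
  exact .iInter fun m => .iInter fun z =>
    (measurable_replaceInitial m z).mono (iSup₂_le fun k _ => (measurable_pi_apply k).comap_le)
      le_rfl hF

/-- Kolmogorov's zero-one law for a possibly non-measurable `E`: its measurable hull can be
shrunk to the tail-invariant set `tailCore (toMeasurable μ E)` of the same measure. -/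
theorem IsTailInvariant.measure_eq_zero_or_one [∀ k, Countable (α k)] [∀ k, Nonempty (α k)]
    {μ : Measure (∀ k, α k)} (hindep : iIndepFun (fun k (x : ∀ k, α k) => x k) μ)
    {E : Set (∀ k, α k)} (hE : IsTailInvariant E) : μ E = 0 ∨ μ E = 1 := by
  set F := tailCore (toMeasurable μ E)
  have hFm : MeasurableSet F := measurableSet_tailCore (measurableSet_toMeasurable μ E)
  have hμF : μ F = μ E := le_antisymm
    ((measure_mono (tailCore_subset _)).trans_eq (measure_toMeasurable E))
    (measure_mono (hE.subset_tailCore (subset_toMeasurable μ E)))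
  rw [← hμF]
  exact measure_zero_or_one_of_measurableSet_limsup_atTop
    (fun k => (measurable_pi_apply k).comap_le) hindep.iIndep
    ((isTailInvariant_tailCore _).measurableSet_limsup hFm)

end TailZeroOne

lemma iIndepFun_eval_of_measure_pi {ι : Type*} {α : ι → Type*} [∀ i, Fintype (α i)]
    [∀ i, MeasurableSpace (α i)] {μ : Measure (∀ i, α i)} (p : ∀ i, Finset (α i) → ℝ≥0∞)
    (hμ : ∀ (s : Finset ι) (t : ∀ i, Finset (α i)),
      μ {x | ∀ i ∈ s, x i ∈ t i} = ∏ i ∈ s, p i (t i)) :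
    iIndepFun (fun i (x : ∀ i, α i) => x i) μ := by
  classical
  rw [iIndepFun_iff_measure_inter_preimage_eq_mul]
  intro s t _
  have hbox : ∀ s : Finset ι, μ (⋂ i ∈ s, (fun x : ∀ i, α i => x i) ⁻¹' t i)
      = ∏ i ∈ s, p i (t i).toFinset := fun s => by
    rw [← hμ]; congr; ext; simp
  refine (hbox s).trans (Finset.prod_congr rfl fun i _ => ?_)
  simpa using (hbox {i}).symm

section ZeroOneValued

variable {X : Type*} {S : Set (X → ℝ)}

lemma apply_eq_zero_or_one_of_mem_closure (hS : ∀ f ∈ S, ∀ x, f x = 0 ∨ f x = 1)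
    {u : X → ℝ} (hu : u ∈ closure S) (x : X) : u x = 0 ∨ u x = 1 := by
  have hclosed : IsClosed (Set.univ.pi fun _ : X => ({0, 1} : Set ℝ)) :=
    isClosed_set_pi fun _ _ => (Set.toFinite _).isClosed
  have hsub : S ⊆ Set.univ.pi fun _ : X => ({0, 1} : Set ℝ) := fun f hf x _ => hS f hf x
  exact closure_minimal hsub hclosed hu x trivial

lemma exists_eqOn_of_mem_closure (hS : ∀ f ∈ S, ∀ x, f x = 0 ∨ f x = 1)
    {u : X → ℝ} (hu : u ∈ closure S) {P : Set X} (hP : P.Finite) :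
    ∃ f ∈ S, Set.EqOn f u P := by
  obtain ⟨f, hfu, hfS⟩ := mem_closure_iff.1 hu (P.pi fun x => Metric.ball (u x) (1 / 2))
    (isOpen_set_pi hP fun _ _ => Metric.isOpen_ball)
    (fun x _ => Metric.mem_ball_self (by norm_num))
  refine ⟨f, hfS, fun x hx => ?_⟩
  have hdist := hfu x hx
  rw [Metric.mem_ball, Real.dist_eq] at hdist
  rcases hS f hfS x with h | h <;>
    rcases apply_eq_zero_or_one_of_mem_closure hS hu x with h' | h' <;>
    simp only [h, h'] at hdist ⊢ <;> norm_num at hdist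

end ZeroOneValued

lemma Finset.sum_le_one_of_zero_one {ι : Type*} {s : Finset ι} {f : ι → ℝ}
    (h01 : ∀ i ∈ s, f i = 0 ∨ f i = 1) (hone : ∀ i ∈ s, ∀ j ∈ s, f i = 1 → f j = 1 → i = j) :
    ∑ i ∈ s, f i ≤ 1 := by
  classical
  have hf : ∀ i ∈ s, f i = if f i = 1 then 1 else 0 := fun i hi => by
    rcases h01 i hi with h | h <;> simp [h]
  rw [Finset.sum_congr rfl hf, Finset.sum_boole, Nat.cast_le_one, Finset.card_le_one]
  simp only [Finset.mem_filter]
  exact fun i hi j hj => hone i hi.1 j hj.1 hi.2 hj.2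

/-! `IsFreeSet W k I` is `I ∈ 𝓘_k`, `coordIndicator k I` is `χH_{kI}`, `freeIndicators W` is `A`,
`limitIndicators W` is `A'` and `WRel W` is the relation `R`. -/

section FreeIndicators

variable {n : ℕ → ℕ} (W : ∀ k, Finset (Fin (n k) × Fin (n k)))

def IsFreeSet (k : ℕ) (I : Finset (Fin (n k))) : Prop :=
  I.card ≤ k ∧ ∀ i ∈ I, ∀ j ∈ I, i ≠ j → (i, j) ∉ W k

noncomputable def coordIndicator (k : ℕ) (I : Finset (Fin (n k))) : (∀ k, Fin (n k)) → ℝ :=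
  Set.indicator {x | x k ∈ I} fun _ => 1

def freeIndicators : Set ((∀ k, Fin (n k)) → ℝ) :=
  {f | ∃ k I, IsFreeSet W k I ∧ f = coordIndicator k I}

def limitIndicators : Set ((∀ k, Fin (n k)) → ℝ) :=
  closure (freeIndicators W) \ freeIndicators W

def WRel (a b : ∀ k, Fin (n k)) : Prop :=
  (∀ k, (a k, b k) ∈ W k) ∧ {k | a k = b k}.Finite

variable {W}

lemma coordIndicator_eq_one_iff {k : ℕ} {I : Finset (Fin (n k))} {x : ∀ k, Fin (n k)} :
    coordIndicator k I x = 1 ↔ x k ∈ I := by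
  by_cases hx : x k ∈ I <;> simp [coordIndicator, hx]

lemma coordIndicator_eq_zero_or_one (k : ℕ) (I : Finset (Fin (n k))) (x : ∀ k, Fin (n k)) :
    coordIndicator k I x = 0 ∨ coordIndicator k I x = 1 := by
  by_cases hx : x k ∈ I <;> simp [coordIndicator, hx]

lemma forall_freeIndicators_eq_zero_or_one :
    ∀ f ∈ freeIndicators W, ∀ x, f x = 0 ∨ f x = 1 := by
  rintro _ ⟨k, I, -, rfl⟩ x
  exact coordIndicator_eq_zero_or_one k I x

namespace limitIndicators

variable {u : (∀ k, Fin (n k)) → ℝ} (hu : u ∈ limitIndicators W)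
include hu

lemma apply_eq_zero_or_one (x : ∀ k, Fin (n k)) : u x = 0 ∨ u x = 1 :=
  apply_eq_zero_or_one_of_mem_closure forall_freeIndicators_eq_zero_or_one hu.1 x

/-- Since only finitely many members of `A` have index below `m`, an element of `A'` is
approximated by members of arbitrarily large index. -/
lemma exists_isFreeSet_eqOn (m : ℕ) {P : Set (∀ k, Fin (n k))} (hP : P.Finite) :
    ∃ k ≥ m, ∃ I, IsFreeSet W k I ∧ Set.EqOn (coordIndicator k I) u P := by
  set T := ⋃ k ∈ Finset.range m, Set.range (coordIndicator (n := n) k)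
  have hT : T.Finite := (Finset.range m).finite_toSet.biUnion fun k _ => Set.finite_range _
  have hu' : u ∈ closure (freeIndicators W \ (freeIndicators W ∩ T)) := by
    refine closure_sdiff ⟨hu.1, ?_⟩
    rw [(hT.inter_of_right _).isClosed.closure_eq]
    exact fun h => hu.2 h.1
  obtain ⟨f, ⟨hfA, hfT⟩, hf⟩ := exists_eqOn_of_mem_closure
    (fun f hf => forall_freeIndicators_eq_zero_or_one f hf.1) hu' hP
  obtain ⟨k, I, hI, rfl⟩ := hfA
  refine ⟨k, not_lt.1 fun hk => hfT ⟨⟨k, I, hI, rfl⟩, ?_⟩, I, hI, hf⟩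
  exact Set.mem_biUnion (Finset.mem_range.2 hk) ⟨I, rfl⟩

lemma apply_eq_of_eventually_eq {x y : ∀ k, Fin (n k)} (hxy : ∀ᶠ k in atTop, x k = y k) :
    u x = u y := by
  obtain ⟨m, hm⟩ := eventually_atTop.1 hxy
  obtain ⟨k, hk, I, -, hI⟩ := exists_isFreeSet_eqOn hu m (Set.toFinite {x, y})
  rw [← hI (by simp), ← hI (by simp)]
  simp only [coordIndicator, Set.indicator_apply, Set.mem_ofPred_eq, hm k hk]

lemma not_apply_eq_one_and_of_wRel {a b : ∀ k, Fin (n k)} (hab : WRel W a b) :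
    ¬(u a = 1 ∧ u b = 1) := by
  rintro ⟨ha, hb⟩
  obtain ⟨M, hM⟩ := hab.2.bddAbove
  obtain ⟨k, hk, I, hI, hIu⟩ := exists_isFreeSet_eqOn hu (M + 1) (Set.toFinite {a, b})
  have haI : a k ∈ I := coordIndicator_eq_one_iff.1 ((hIu (by simp)).trans ha)
  have hbI : b k ∈ I := coordIndicator_eq_one_iff.1 ((hIu (by simp)).trans hb)
  have hne : a k ≠ b k := fun h => by have := hM h; omega
  exact hI.2 _ haI _ hbI hne (hab.1 k)

lemma sum_apply_le_one_of_chain {x : ℕ → ∀ k, Fin (n k)} {r : ℕ}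
    (hx : ∀ i j, i < j → j ≤ r → WRel W (x j) (x i)) :
    ∑ i ∈ Finset.range (r + 1), u (x i) ≤ 1 := by
  refine Finset.sum_le_one_of_zero_one (fun i _ => apply_eq_zero_or_one hu _)
    fun i hi j hj hi1 hj1 => ?_
  rw [Finset.mem_range, Nat.lt_succ_iff] at hi hj
  rcases lt_trichotomy i j with hij | rfl | hji
  · exact absurd ⟨hj1, hi1⟩ (not_apply_eq_one_and_of_wRel hu (hx i j hij hj))
  · rfl
  · exact absurd ⟨hi1, hj1⟩ (not_apply_eq_one_and_of_wRel hu (hx j i hji hi))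

end limitIndicators

variable [MeasurableSpace (limitIndicators W)] (ν : Measure (limitIndicators W))

lemma isTailInvariant_setOf_le_integral (δ : ℝ) :
    IsTailInvariant {x | δ ≤ ∫ u : limitIndicators W, (u : (∀ k, Fin (n k)) → ℝ) x ∂ν} :=
  fun _ _ hxy hx => hx.trans_eq <| integral_congr_ae <| ae_of_all _ fun u =>
    limitIndicators.apply_eq_of_eventually_eq u.2 hxy

lemma sum_integral_le_one_of_chain [OpensMeasurableSpace (limitIndicators W)]
    [IsProbabilityMeasure ν]
    {x : ℕ → ∀ k, Fin (n k)} {r : ℕ} (hx : ∀ i j, i < j → j ≤ r → WRel W (x j) (x i)) :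
    ∑ i ∈ Finset.range (r + 1), ∫ u : limitIndicators W, (u : (∀ k, Fin (n k)) → ℝ) (x i) ∂ν
      ≤ 1 := by
  have hint : ∀ y, Integrable (fun u : limitIndicators W => (u : (∀ k, Fin (n k)) → ℝ) y) ν :=
    fun y => Integrable.of_bound
      ((continuous_apply y).comp continuous_subtype_val).measurable.aestronglyMeasurable 1
      (ae_of_all _ fun u => by
        rcases limitIndicators.apply_eq_zero_or_one u.2 y with h | h <;> simp [h])
  calc ∑ i ∈ Finset.range (r + 1), ∫ u : limitIndicators W, (u : (∀ k, Fin (n k)) → ℝ) (x i) ∂ν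
      = ∫ u : limitIndicators W,
          ∑ i ∈ Finset.range (r + 1), (u : (∀ k, Fin (n k)) → ℝ) (x i) ∂ν :=
        (integral_finsetSum _ fun i _ => hint _).symm
    _ ≤ ∫ _ : limitIndicators W, (1 : ℝ) ∂ν :=
        integral_mono (integrable_finsetSum _ fun i _ => hint _) (integrable_const 1)
          fun u => limitIndicators.sum_apply_le_one_of_chain u.2 hx
    _ = 1 := by simp

end FreeIndicators

theorem stmt_9_general (n : ℕ → ℕ) (hn : ∀ k, 2 ^ k ≤ n k)
    (W : ∀ k, Finset (Fin (n k) × Fin (n k)))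
    (μ : Measure (∀ k, Fin (n k)))
    (hcyl : ∀ s : Finset ℕ, ∀ t : ∀ k, Finset (Fin (n k)),
      μ {x | ∀ k ∈ s, x k ∈ t k} = ∏ k ∈ s, ((t k).card : ℝ≥0∞) / (n k : ℝ≥0∞))
    (hdag : ∀ D : Set (∀ k, Fin (n k)), μ D = 1 → ∀ r : ℕ,
      ∃ x : ℕ → ∀ k, Fin (n k), (∀ i ≤ r, x i ∈ D) ∧
        ∀ i j, i < j → j ≤ r →
          ((∀ k, (x j k, x i k) ∈ W k) ∧ {k | x j k = x i k}.Finite))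
    (A : Set ((∀ k, Fin (n k)) → ℝ))
    (hA : A = {f | ∃ k : ℕ, ∃ I : Finset (Fin (n k)),
      (I.card ≤ k ∧ ∀ i ∈ I, ∀ j ∈ I, i ≠ j → (i, j) ∉ W k) ∧
      f = Set.indicator {x : ∀ k', Fin (n k') | x k ∈ I} (fun _ => (1 : ℝ))})
    (A' : Set ((∀ k, Fin (n k)) → ℝ)) (hA' : A' = closure A \ A)
    (ν : @Measure ↥A' (borel ↥A'))
    (hν1 : ν Set.univ = 1) :
    ∀ δ : ℝ, 0 < δ →
      μ {x | δ ≤ ∫ u : ↥A', (u : (∀ k, Fin (n k)) → ℝ) x ∂ν} = 0 := by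
  intro δ hδ
  obtain rfl : A = freeIndicators W := hA
  obtain rfl : A' = limitIndicators W := hA'
  let := borel (limitIndicators W)
  have : BorelSpace (limitIndicators W) := ⟨rfl⟩
  have : IsProbabilityMeasure ν := ⟨hν1⟩
  have : ∀ k, Nonempty (Fin (n k)) := fun k =>
    Fin.pos_iff_nonempty.1 ((Nat.two_pow_pos k).trans_le (hn k))
  have hindep := iIndepFun_eval_of_measure_pi (fun k t => (t.card : ℝ≥0∞) / n k) hcyl
  refine ((isTailInvariant_setOf_le_integral ν δ).measure_eq_zero_or_one hindep).resolve_right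
    fun hE => ?_
  set r := ⌈δ⁻¹⌉₊
  obtain ⟨x, hxE, hx⟩ := hdag _ hE r
  have hle : ((r : ℝ) + 1) * δ ≤ 1 := by
    refine le_trans ?_ (sum_integral_le_one_of_chain ν hx)
    simpa [mul_comm] using Finset.card_nsmul_le_sum _ _ δ
      fun i hi => hxE i (Nat.lt_succ_iff.1 (Finset.mem_range.1 hi))
  have hlt : 1 < ((r : ℝ) + 1) * δ := by
    have hr : δ⁻¹ ≤ r := Nat.le_ceil δ⁻¹
    calc (1 : ℝ) = δ⁻¹ * δ := (inv_mul_cancel₀ hδ.ne').symm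
      _ < ((r : ℝ) + 1) * δ := by gcongr; linarith
  exact hlt.not_ge hle

/-- Assume `(†)`, with witnessing data `⟨n_k⟩, ⟨W_k⟩, X = ∏_k n_k, μ` (the product of the
uniform probabilities, characterized here by its values on cylinders) and
`R = {(x,y) : (x(k),y(k)) ∈ W_k ∀ k, {k : x(k) = y(k)} finite}`.  Let
`𝓘_k = {I ⊆ n_k : #(I) ≤ k, (i,j) ∉ W_k for distinct i,j ∈ I}`, `H_{kI} = {x : x(k) ∈ I}`,
`A = {χH_{kI} : k, I ∈ 𝓘_k}`, `Z` the pointwise closure of `A` in `ℝ^X` and `A' = Z \ A`.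
Then for every Radon probability measure `ν` on `A'` (with its subspace topology and Borel
σ-algebra), the function `w(x) = ∫_{A'} u(x) ν(du)` vanishes `μ`-almost everywhere: for every
`δ > 0` the set `{x : w(x) ≥ δ}` has `μ`-outer measure zero. -/
theorem stmt_9 (n : ℕ → ℕ) (hn : ∀ k, 2 ^ k ≤ n k)
    (W : ∀ k, Finset (Fin (n k) × Fin (n k)))
    (hW : ∀ k, ((W k).card : ℝ) ≤ ((n k : ℝ)) ^ 2 / 2 ^ k)
    (μ : Measure (∀ k, Fin (n k))) (hμ : IsProbabilityMeasure μ)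
    (hcyl : ∀ s : Finset ℕ, ∀ t : ∀ k, Finset (Fin (n k)),
      μ {x | ∀ k ∈ s, x k ∈ t k} = ∏ k ∈ s, ((t k).card : ℝ≥0∞) / (n k : ℝ≥0∞))
    (hdag : ∀ D : Set (∀ k, Fin (n k)), μ D = 1 → ∀ r : ℕ,
      ∃ x : ℕ → ∀ k, Fin (n k), (∀ i ≤ r, x i ∈ D) ∧
        ∀ i j, i < j → j ≤ r →
          ((∀ k, (x j k, x i k) ∈ W k) ∧ {k | x j k = x i k}.Finite))
    (A : Set ((∀ k, Fin (n k)) → ℝ))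
    (hA : A = {f | ∃ k : ℕ, ∃ I : Finset (Fin (n k)),
      (I.card ≤ k ∧ ∀ i ∈ I, ∀ j ∈ I, i ≠ j → (i, j) ∉ W k) ∧
      f = Set.indicator {x : ∀ k', Fin (n k') | x k ∈ I} (fun _ => (1 : ℝ))})
    (A' : Set ((∀ k, Fin (n k)) → ℝ)) (hA' : A' = closure A \ A)
    (ν : @Measure ↥A' (borel ↥A'))
    (hν1 : ν Set.univ = 1)
    (hνRadon : ∀ S : Set ↥A', @MeasurableSet _ (borel ↥A') S →
      ν S = ⨆ (K : Set ↥A') (_ : K ⊆ S) (_ : IsCompact K), ν K) :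
    ∀ δ : ℝ, 0 < δ →
      μ {x | δ ≤ ∫ u : ↥A', (u : (∀ k, Fin (n k)) → ℝ) x ∂ν} = 0 :=
  stmt_9_general n hn W μ hcyl hdag A hA A' hA' ν hν1
end
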